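/- Define g_k : ℝ² → ℝ by g_k(x) = k·ReLU(⟨(k,0), x⟩) − k·ReLU(⟨(k, −1/k²), x⟩). For any sequence of two-layer bias-free ReLU network parametrizations Φ_k ∈ ℝ^{2×2} × ℝ^{1×2} with realizations equal to g_k, the norms ‖Φ_k‖_∞ tend to infinity: there is no uniform bound sup_k ‖Φ_k‖_∞ < ∞, even though ‖g_k‖_{L^∞((−1,1)²)} → 0. -/

import Mathlib

/-!
Since ReLU is 1-Lipschitz, a two-layer network whose entries are bounded by `M` has a
realization that is `4 M²`-Lipschitz for the sup norm on `ℝ²`. But `g_k` rises by `1/k` over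
the horizontal step from `(0, 1)` to `(k⁻³, 1)`, so its Lipschitz constant is at least `k²`;
hence `k ≤ 2 M` for every `k`, which is absurd.
-/

open Finset

section ReluNet

variable {m d : Type*} [Fintype m] [Fintype d]

def reluNet (A : m → d → ℝ) (C : m → ℝ) (x : d → ℝ) : ℝ :=
  ∑ i, C i * max (∑ j, A i j * x j) 0

lemma abs_sum_mul_sub_sum_mul_le {a : d → ℝ} {M : ℝ} (ha : ∀ j, |a j| ≤ M) (x y : d → ℝ) :
    |∑ j, a j * x j - ∑ j, a j * y j| ≤ Fintype.card d * (M * ‖x - y‖) := by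
  rw [← sum_sub_distrib]
  calc |∑ j, (a j * x j - a j * y j)| ≤ ∑ j, |a j * x j - a j * y j| := abs_sum_le_sum_abs _ _
    _ ≤ ∑ _j : d, M * ‖x - y‖ := by
        gcongr with j
        rw [← mul_sub, abs_mul]
        exact mul_le_mul (ha j) (norm_le_pi_norm (x - y) j) (abs_nonneg _)
          ((abs_nonneg _).trans (ha j))
    _ = Fintype.card d * (M * ‖x - y‖) := by simp

lemma abs_reluNet_sub_le {A : m → d → ℝ} {C : m → ℝ} {M : ℝ} (hA : ∀ i j, |A i j| ≤ M)
    (hC : ∀ i, |C i| ≤ M) (x y : d → ℝ) :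
    |reluNet A C x - reluNet A C y| ≤ Fintype.card m * Fintype.card d * M ^ 2 * ‖x - y‖ := by
  unfold reluNet
  rw [← sum_sub_distrib]
  calc |∑ i, (C i * max (∑ j, A i j * x j) 0 - C i * max (∑ j, A i j * y j) 0)|
      ≤ ∑ i, |C i * max (∑ j, A i j * x j) 0 - C i * max (∑ j, A i j * y j) 0| :=
        abs_sum_le_sum_abs _ _
    _ ≤ ∑ _i : m, M * (Fintype.card d * (M * ‖x - y‖)) := by
        gcongr with i
        rw [← mul_sub, abs_mul]
        exact mul_le_mul (hC i)
          ((abs_max_sub_max_le_abs _ _ _).trans (abs_sum_mul_sub_sum_mul_le (hA i) x y))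
          (abs_nonneg _) ((abs_nonneg _).trans (hC i))
    _ = Fintype.card m * Fintype.card d * M ^ 2 * ‖x - y‖ := by
        simp only [sum_const, card_univ, nsmul_eq_mul]; ring

end ReluNet

noncomputable def steepRelu (k : ℝ) (x : Fin 2 → ℝ) : ℝ :=
  k * max (k * x 0) 0 - k * max (k * x 0 - x 1 / k ^ 2) 0

lemma steepRelu_sub {k : ℝ} (hk : 0 < k) :
    steepRelu k ![k⁻¹ ^ 3, 1] - steepRelu k ![0, 1] = k⁻¹ := by
  have hpos : 0 < 1 / k ^ 2 := by positivity
  simp only [steepRelu, Matrix.cons_val_zero, Matrix.cons_val_one, mul_zero, zero_sub,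
    max_eq_right (neg_nonpos.mpr hpos.le)]
  have e : k * k⁻¹ ^ 3 = 1 / k ^ 2 := by field_simp
  rw [e, sub_self, max_eq_left hpos.le]
  field_simp
  simp

lemma norm_vecCons_sub_vecCons_le (t s : ℝ) : ‖(![t, s] - ![0, s] : Fin 2 → ℝ)‖ ≤ |t| := by
  rw [pi_norm_le_iff_of_nonneg (abs_nonneg t), Fin.forall_fin_two]
  simp

lemma sq_le_of_reluNet_eq_steepRelu {A : Fin 2 → Fin 2 → ℝ} {C : Fin 2 → ℝ} {M k : ℝ}
    (hA : ∀ i j, |A i j| ≤ M) (hC : ∀ i, |C i| ≤ M) (hk : 0 < k)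
    (hreal : ∀ x, reluNet A C x = steepRelu k x) : k ^ 2 ≤ 4 * M ^ 2 := by
  have hlip := abs_reluNet_sub_le hA hC ![k⁻¹ ^ 3, 1] ![0, 1]
  rw [hreal, hreal, steepRelu_sub hk, abs_of_pos (inv_pos.mpr hk)] at hlip
  have hdist := norm_vecCons_sub_vecCons_le (k⁻¹ ^ 3) 1
  rw [abs_of_pos (by positivity)] at hdist
  have hstep : k⁻¹ ≤ 4 * M ^ 2 * k⁻¹ ^ 3 := by
    simp only [Fintype.card_fin] at hlip
    nlinarith [sq_nonneg M]
  have hk3 : 0 < k ^ 3 := by positivity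
  calc k ^ 2 = k⁻¹ * k ^ 3 := by field_simp
    _ ≤ 4 * M ^ 2 * k⁻¹ ^ 3 * k ^ 3 := by gcongr
    _ = 4 * M ^ 2 := by field_simp

/-- Failure of inverse stability w.r.t. the uniform norm: any sequence of
parametrizations realizing `g_k` has parameters tending to infinity (no
uniform bound on the entries exists), even though `g_k → 0` uniformly. -/
theorem stmt_5
    (A : ℕ → Fin 2 → Fin 2 → ℝ) (C : ℕ → Fin 2 → ℝ)
    (hreal : ∀ k : ℕ, 1 ≤ k → ∀ x : Fin 2 → ℝ,
      ∑ i, C k i * max (∑ j, A k i j * x j) 0 =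
        (k : ℝ) * max ((k : ℝ) * x 0) 0 -
          (k : ℝ) * max ((k : ℝ) * x 0 - x 1 / (k : ℝ) ^ 2) 0) :
    ¬ ∃ M : ℝ, ∀ k : ℕ, 1 ≤ k →
        (∀ i j, |A k i j| ≤ M) ∧ (∀ i, |C k i| ≤ M) := by
  rintro ⟨M, hM⟩
  set k : ℕ := ⌈2 * |M|⌉₊ + 1
  have hk : 2 * |M| < k := Nat.lt_of_ceil_lt (Nat.lt_succ_self _)
  obtain ⟨hA, hC⟩ := hM k (by omega)
  have hsq := sq_le_of_reluNet_eq_steepRelu hA hC (by positivity) (hreal k (by omega))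
  nlinarith [abs_nonneg M, sq_abs M]
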